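/- In ℝ^4 with canonical orthonormal basis {e_1, e_2, e_3, e_4}, let W_1 = span{e_2, e_3, e_4}, W_2 = span{e_1, e_3, e_4}, and W_3 = span{(e_1+e_2)/√2, e_3, e_4}. Then the family of three hyperplanes {W_1, W_2, W_3} does norm retrieval for ℝ^4. -/

import Mathlib

open RealInnerProductSpace

/-- The three hyperplanes `W 0 = span{e₂,e₃,e₄}`, `W 1 = span{e₁,e₃,e₄}`,
`W 2 = span{(e₁+e₂)/√2, e₃, e₄}` of `ℝ^4` (0-indexed coordinates). -/
noncomputable def threeHyperplanesR4 : Fin 3 → Submodule ℝ (EuclideanSpace ℝ (Fin 4)) :=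
  ![Submodule.span ℝ
      {EuclideanSpace.single 1 (1 : ℝ), EuclideanSpace.single 2 (1 : ℝ),
       EuclideanSpace.single 3 (1 : ℝ)},
    Submodule.span ℝ
      {EuclideanSpace.single 0 (1 : ℝ), EuclideanSpace.single 2 (1 : ℝ),
       EuclideanSpace.single 3 (1 : ℝ)},
    Submodule.span ℝ
      {(Real.sqrt 2)⁻¹ • (EuclideanSpace.single 0 (1 : ℝ) + EuclideanSpace.single 1 (1 : ℝ)),
       EuclideanSpace.single 2 (1 : ℝ), EuclideanSpace.single 3 (1 : ℝ)}]

lemma aux_decomp (x : EuclideanSpace ℝ (Fin 4)) :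
    x = x 0 • EuclideanSpace.single 0 (1 : ℝ) + x 1 • EuclideanSpace.single 1 (1 : ℝ)
      + x 2 • EuclideanSpace.single 2 (1 : ℝ) + x 3 • EuclideanSpace.single 3 (1 : ℝ) := by
  ext i
  fin_cases i <;>
    simp [EuclideanSpace.single_apply]

lemma aux_proj_norm_sq (n : EuclideanSpace ℝ (Fin 4)) (hn : ‖n‖ = 1)
    (W : Submodule ℝ (EuclideanSpace ℝ (Fin 4))) (hW : W = (ℝ ∙ n)ᗮ)
    (x : EuclideanSpace ℝ (Fin 4)) :
    ‖(Submodule.orthogonalProjectionOnto W x : EuclideanSpace ℝ (Fin 4))‖ ^ 2 = ‖x‖ ^ 2 - ⟪n, x⟫ ^ 2 := by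
  subst hW
  have h := Submodule.norm_sq_eq_add_norm_sq_projection x (ℝ ∙ n)
  have h2 : (Submodule.orthogonalProjectionOnto (ℝ ∙ n) x : EuclideanSpace ℝ (Fin 4)) = ⟪n, x⟫ • n := by
    rw [Submodule.coe_orthogonalProjectionOnto_apply, Submodule.starProjection_singleton, hn]; norm_num
  have h3 : ‖(Submodule.orthogonalProjectionOnto (ℝ ∙ n) x : EuclideanSpace ℝ (Fin 4))‖ ^ 2 = ⟪n, x⟫ ^ 2 := by
    rw [h2, norm_smul, hn, mul_one, Real.norm_eq_abs, sq_abs]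
  simp only [Submodule.coe_norm] at h
  rw [h3] at h
  linarith

lemma aux_sqrt2 : Real.sqrt 2 * (Real.sqrt 2)⁻¹ = 1 := by
  rw [mul_inv_cancel₀]
  positivity

lemma aux_W0 : threeHyperplanesR4 0 = (ℝ ∙ (EuclideanSpace.single 0 (1 : ℝ)))ᗮ := by
  apply le_antisymm
  · rw [show threeHyperplanesR4 0 = Submodule.span ℝ
      {EuclideanSpace.single 1 (1 : ℝ), EuclideanSpace.single 2 (1 : ℝ),
       EuclideanSpace.single 3 (1 : ℝ)} from rfl, Submodule.span_le]
    rintro v (rfl | rfl | rfl) <;>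
      · rw [SetLike.mem_coe, Submodule.mem_orthogonal_singleton_iff_inner_right]
        simp [EuclideanSpace.inner_single_left, EuclideanSpace.single_apply]
  · intro x hx
    rw [Submodule.mem_orthogonal_singleton_iff_inner_right,
      EuclideanSpace.inner_single_left] at hx
    simp only [map_one, one_mul] at hx
    rw [show threeHyperplanesR4 0 = Submodule.span ℝ
      {EuclideanSpace.single 1 (1 : ℝ), EuclideanSpace.single 2 (1 : ℝ),
       EuclideanSpace.single 3 (1 : ℝ)} from rfl]
    rw [aux_decomp x, hx]
    simp only [zero_smul, zero_add]
    refine Submodule.add_mem _ (Submodule.add_mem _ ?_ ?_) ?_ <;>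
      exact Submodule.smul_mem _ _ (Submodule.subset_span (by simp))

lemma aux_W1 : threeHyperplanesR4 1 = (ℝ ∙ (EuclideanSpace.single 1 (1 : ℝ)))ᗮ := by
  apply le_antisymm
  · rw [show threeHyperplanesR4 1 = Submodule.span ℝ
      {EuclideanSpace.single 0 (1 : ℝ), EuclideanSpace.single 2 (1 : ℝ),
       EuclideanSpace.single 3 (1 : ℝ)} from rfl, Submodule.span_le]
    rintro v (rfl | rfl | rfl) <;>
      · rw [SetLike.mem_coe, Submodule.mem_orthogonal_singleton_iff_inner_right]
        simp [EuclideanSpace.inner_single_left, EuclideanSpace.single_apply]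
  · intro x hx
    rw [Submodule.mem_orthogonal_singleton_iff_inner_right,
      EuclideanSpace.inner_single_left] at hx
    simp only [map_one, one_mul] at hx
    rw [show threeHyperplanesR4 1 = Submodule.span ℝ
      {EuclideanSpace.single 0 (1 : ℝ), EuclideanSpace.single 2 (1 : ℝ),
       EuclideanSpace.single 3 (1 : ℝ)} from rfl]
    rw [aux_decomp x, hx]
    simp only [zero_smul, add_zero, zero_add]
    refine Submodule.add_mem _ (Submodule.add_mem _ ?_ ?_) ?_ <;>
      exact Submodule.smul_mem _ _ (Submodule.subset_span (by simp))

noncomputable def auxN2 : EuclideanSpace ℝ (Fin 4) :=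
  (Real.sqrt 2)⁻¹ • (EuclideanSpace.single 0 (1 : ℝ) - EuclideanSpace.single 1 (1 : ℝ))

lemma aux_W2 : threeHyperplanesR4 2 = (ℝ ∙ auxN2)ᗮ := by
  have hgen : threeHyperplanesR4 2 = Submodule.span ℝ
      {(Real.sqrt 2)⁻¹ • (EuclideanSpace.single 0 (1 : ℝ) + EuclideanSpace.single 1 (1 : ℝ)),
       EuclideanSpace.single 2 (1 : ℝ), EuclideanSpace.single 3 (1 : ℝ)} := rfl
  apply le_antisymm
  · rw [hgen, Submodule.span_le]
    rintro v (rfl | rfl | rfl) <;>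
      · rw [SetLike.mem_coe, Submodule.mem_orthogonal_singleton_iff_inner_right, auxN2]
        simp [inner_smul_left, inner_smul_right, inner_sub_left, inner_add_right,
          EuclideanSpace.inner_single_left, EuclideanSpace.single_apply]
  · intro x hx
    rw [Submodule.mem_orthogonal_singleton_iff_inner_right, auxN2,
      real_inner_smul_left, inner_sub_left] at hx
    simp only [EuclideanSpace.inner_single_left, map_one, one_mul] at hx
    have h2 : (Real.sqrt 2)⁻¹ ≠ 0 := by positivity
    have hx01 : x 0 = x 1 := by
      have := mul_eq_zero.mp hx
      rcases this with h | h
      · exact absurd h h2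
      · linarith
    rw [hgen]
    have hxeq : x = (Real.sqrt 2 * x 0) •
        ((Real.sqrt 2)⁻¹ • (EuclideanSpace.single 0 (1 : ℝ) + EuclideanSpace.single 1 (1 : ℝ)))
        + x 2 • EuclideanSpace.single 2 (1 : ℝ) + x 3 • EuclideanSpace.single 3 (1 : ℝ) := by
      conv_lhs => rw [aux_decomp x]
      rw [smul_smul, mul_comm (Real.sqrt 2) (x 0), mul_assoc, aux_sqrt2, mul_one, smul_add,
        ← hx01]
    rw [hxeq]
    refine Submodule.add_mem _ (Submodule.add_mem _ ?_ ?_) ?_ <;>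
      exact Submodule.smul_mem _ _ (Submodule.subset_span (by simp))

lemma aux_norm_n2 : ‖auxN2‖ = 1 := by
  have h : ‖auxN2‖ ^ 2 = 1 := by
    rw [← real_inner_self_eq_norm_sq, auxN2]
    rw [real_inner_smul_left, real_inner_smul_right, inner_sub_left, inner_sub_right,
      inner_sub_right]
    simp only [EuclideanSpace.inner_single_left, map_one, one_mul,
      EuclideanSpace.single_apply]
    norm_num
    rw [← mul_assoc]
    rw [show ((Real.sqrt 2)⁻¹ * (Real.sqrt 2)⁻¹ : ℝ) = ((Real.sqrt 2) * (Real.sqrt 2))⁻¹ by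
      rw [mul_inv]]
    rw [Real.mul_self_sqrt (by norm_num)]
    norm_num
  nlinarith [norm_nonneg auxN2]

/-- The three hyperplanes `{W i}` do norm retrieval for `ℝ^4`. -/
theorem three_hyperplanes_norm_retrieval_R4 :
    ∀ x y : EuclideanSpace ℝ (Fin 4),
      (∀ i, ‖(Submodule.orthogonalProjectionOnto (threeHyperplanesR4 i) x : EuclideanSpace ℝ (Fin 4))‖ =
            ‖(Submodule.orthogonalProjectionOnto (threeHyperplanesR4 i) y : EuclideanSpace ℝ (Fin 4))‖) →
      ‖x‖ = ‖y‖ := by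
  intro x y h
  have hn0 : ‖(EuclideanSpace.single 0 (1 : ℝ) : EuclideanSpace ℝ (Fin 4))‖ = 1 := by
    rw [EuclideanSpace.norm_single]; norm_num
  have hn1 : ‖(EuclideanSpace.single 1 (1 : ℝ) : EuclideanSpace ℝ (Fin 4))‖ = 1 := by
    rw [EuclideanSpace.norm_single]; norm_num
  have e0x := aux_proj_norm_sq _ hn0 _ aux_W0 x
  have e0y := aux_proj_norm_sq _ hn0 _ aux_W0 y
  have e1x := aux_proj_norm_sq _ hn1 _ aux_W1 x
  have e1y := aux_proj_norm_sq _ hn1 _ aux_W1 y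
  have e2x := aux_proj_norm_sq _ aux_norm_n2 _ aux_W2 x
  have e2y := aux_proj_norm_sq _ aux_norm_n2 _ aux_W2 y
  have q0 := congrArg (· ^ 2) (h 0)
  have q1 := congrArg (· ^ 2) (h 1)
  have q2 := congrArg (· ^ 2) (h 2)
  rw [e0x, e0y] at q0
  rw [e1x, e1y] at q1
  rw [e2x, e2y] at q2
  have hi0x : ⟪EuclideanSpace.single 0 (1 : ℝ), x⟫ = x 0 := by
    simp [EuclideanSpace.inner_single_left]
  have hi0y : ⟪EuclideanSpace.single 0 (1 : ℝ), y⟫ = y 0 := by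
    simp [EuclideanSpace.inner_single_left]
  have hi1x : ⟪EuclideanSpace.single 1 (1 : ℝ), x⟫ = x 1 := by
    simp [EuclideanSpace.inner_single_left]
  have hi1y : ⟪EuclideanSpace.single 1 (1 : ℝ), y⟫ = y 1 := by
    simp [EuclideanSpace.inner_single_left]
  have hi2x : ⟪auxN2, x⟫ = (Real.sqrt 2)⁻¹ * (x 0 - x 1) := by
    rw [auxN2, real_inner_smul_left, inner_sub_left]
    simp [EuclideanSpace.inner_single_left]
  have hi2y : ⟪auxN2, y⟫ = (Real.sqrt 2)⁻¹ * (y 0 - y 1) := by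
    rw [auxN2, real_inner_smul_left, inner_sub_left]
    simp [EuclideanSpace.inner_single_left]
  rw [hi0x, hi0y] at q0
  rw [hi1x, hi1y] at q1
  rw [hi2x, hi2y] at q2
  have hs : ((Real.sqrt 2)⁻¹ : ℝ) ^ 2 = 1 / 2 := by
    rw [inv_pow, Real.sq_sqrt (by norm_num : (2:ℝ) ≥ 0)]
    norm_num
  rw [mul_pow, mul_pow, hs] at q2
  clear h e0x e0y e1x e1y e2x e2y hi0x hi0y hi1x hi1y hi2x hi2y hs
  have hprod : x 0 * x 1 = y 0 * y 1 := by linear_combination q2 - q0/2 - q1/2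
  have hprod2 : (x 0 * x 1) ^ 2 = (y 0 * y 1) ^ 2 := by rw [hprod]
  have hsq : ‖x‖ ^ 2 = ‖y‖ ^ 2 := by
    set nx := ‖x‖ ^ 2; set ny := ‖y‖ ^ 2
    set a := x 0; set b := x 1; set c := y 0; set d := y 1
    clear_value nx ny a b c d
    clear hprod
    nlinarith [hprod2, q0, q1, sq_nonneg (x 0), sq_nonneg (x 1), sq_nonneg (y 0),
      sq_nonneg (y 1), sq_nonneg (‖x‖ ^ 2 - ‖y‖ ^ 2)]
  calc ‖x‖ = Real.sqrt (‖x‖ ^ 2) := (Real.sqrt_sq (norm_nonneg x)).symm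
    _ = Real.sqrt (‖y‖ ^ 2) := by rw [hsq]
    _ = ‖y‖ := Real.sqrt_sq (norm_nonneg y)
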